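/- Let A : ℝ^{n1×n2×n3} → ℝ^m be a linear map satisfying the tRIP with constants δ_{2r} and δ_{3r} in (0,1). Let X* ∈ T_r, e ∈ ℝ^m with ‖e‖ ≤ ε, and y = A(X*) + e. Let X ∈ T_r, γ > 0, and let X⁺ ∈ T_r be a best tubal-rank-r approximation of Z = X − γA*(A(X) − y), i.e. ‖X⁺ − Z‖ ≤ ‖W − Z‖ for all W ∈ T_r, where A* is the adjoint of A. Then ‖X⁺ − X*‖ ≤ 2(|1−γ| + γδ_{3r})·‖X − X*‖ + 2γε√(1+δ_{2r}). -/

import Mathlib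

open scoped RealInnerProductSpace

noncomputable section

/-- Third-order tensors with the Frobenius (Euclidean) inner product structure. -/
abbrev Tensor (n1 n2 n3 : ℕ) : Type := EuclideanSpace ℝ (Fin n1 × Fin n2 × Fin n3)

/-- `unfold X` stacks the frontal slices of `X` vertically: row index `(k, i)`, column `j`. -/
def unfold {n1 n2 n3 : ℕ} (X : Tensor n1 n2 n3) : Matrix (Fin n3 × Fin n1) (Fin n2) ℝ :=
  fun ki j => X (ki.2, j, ki.1)

/-- Block-circulant matrix of a tensor: block `(p, q)` is the frontal slice `(p - q) mod n3`. -/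
def bcirc {n1 n2 n3 : ℕ} (X : Tensor n1 n2 n3) :
    Matrix (Fin n3 × Fin n1) (Fin n3 × Fin n2) ℝ :=
  fun pi qj => X (pi.2, qj.2, pi.1 - qj.1)

/-- The t-product `A * B`, characterized by `unfold (A*B) = bcirc A * unfold B`. -/
def tProd {n1 n2 n4 n3 : ℕ} (A : Tensor n1 n2 n3) (B : Tensor n2 n4 n3) : Tensor n1 n4 n3 :=
  WithLp.toLp 2 fun ijl : Fin n1 × Fin n4 × Fin n3 => (bcirc A * unfold B) (ijl.2.2, ijl.1) ijl.2.1

/-- `Tset n1 n2 n3 r` is the set `T_r` of tensors of tubal rank at most `r`. -/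
def Tset (n1 n2 n3 r : ℕ) : Set (Tensor n1 n2 n3) :=
  {X | ∃ (X1 : Tensor n1 r n3) (X2 : Tensor r n2 n3), X = tProd X1 X2}

lemma tProd_apply' {n1 n2 n4 n3 : ℕ} (A : Tensor n1 n2 n3) (B : Tensor n2 n4 n3)
    (i : Fin n1) (j : Fin n4) (l : Fin n3) :
    tProd A B (i, j, l) = ∑ q : Fin n3, ∑ k : Fin n2, A (i, k, l - q) * B (k, j, q) := by
  simp [tProd, Matrix.mul_apply, bcirc, unfold, Fintype.sum_prod_type]

lemma Tset_smul' {n1 n2 n3 r : ℕ} (c : ℝ) {X : Tensor n1 n2 n3} (hX : X ∈ Tset n1 n2 n3 r) :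
    c • X ∈ Tset n1 n2 n3 r := by
  obtain ⟨X1, X2, rfl⟩ := hX
  refine ⟨c • X1, X2, ?_⟩
  ext ijl
  obtain ⟨i, j, l⟩ := ijl
  show c * tProd X1 X2 (i, j, l) = _
  simp only [tProd_apply', Finset.mul_sum]
  refine Finset.sum_congr rfl fun q _ => Finset.sum_congr rfl fun k _ => ?_
  show c * (X1 (i,k,l-q) * X2 (k,j,q)) = (c • X1) (i,k,l-q) * X2 (k,j,q)
  show _ = c * X1 (i,k,l-q) * X2 (k,j,q)
  ring

lemma Tset_add' {n1 n2 n3 r s : ℕ} {X Y : Tensor n1 n2 n3}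
    (hX : X ∈ Tset n1 n2 n3 r) (hY : Y ∈ Tset n1 n2 n3 s) :
    X + Y ∈ Tset n1 n2 n3 (r + s) := by
  obtain ⟨X1, X2, rfl⟩ := hX
  obtain ⟨Y1, Y2, rfl⟩ := hY
  refine ⟨WithLp.toLp 2 fun p : Fin n1 × Fin (r + s) × Fin n3 => Fin.addCases (fun k => X1 (p.1, k, p.2.2)) (fun k => Y1 (p.1, k, p.2.2)) p.2.1,
    WithLp.toLp 2 fun p : Fin (r + s) × Fin n2 × Fin n3 => Fin.addCases (fun k => X2 (k, p.2.1, p.2.2)) (fun k => Y2 (k, p.2.1, p.2.2)) p.1, ?_⟩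
  ext ijl
  obtain ⟨i, j, l⟩ := ijl
  show tProd X1 X2 (i,j,l) + tProd Y1 Y2 (i,j,l) = _
  simp only [tProd_apply']
  rw [← Finset.sum_add_distrib]
  refine Finset.sum_congr rfl fun q _ => ?_
  rw [Fin.sum_univ_add]
  simp

lemma cross_aux' {n1 n2 n3 m : ℕ} (A : Tensor n1 n2 n3 →ₗ[ℝ] EuclideanSpace ℝ (Fin m))
    {δ : ℝ} {S : Set (Tensor n1 n2 n3)}
    (hA : ∀ X ∈ S, (1-δ)*‖X‖^2 ≤ ‖A X‖^2 ∧ ‖A X‖^2 ≤ (1+δ)*‖X‖^2)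
    {U V : Tensor n1 n2 n3} (h1 : U + V ∈ S) (h2 : U - V ∈ S) :
    |⟪A U, A V⟫ - ⟪U, V⟫| ≤ δ * (‖U‖^2 + ‖V‖^2) / 2 := by
  obtain ⟨p1, p2⟩ := hA (U+V) h1
  obtain ⟨q1, q2⟩ := hA (U-V) h2
  rw [map_add] at p1 p2
  rw [map_sub] at q1 q2
  have e1 := norm_add_sq_real (A U) (A V)
  have e2 := norm_sub_sq_real (A U) (A V)
  have e3 := norm_add_sq_real U V
  have e4 := norm_sub_sq_real U V
  rw [e3] at p1 p2
  rw [e4] at q1 q2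
  rw [abs_le]
  constructor <;> (rw [show ⟪A U, A V⟫ = (‖A U + A V‖^2 - ‖A U - A V‖^2)/4 by linarith]; nlinarith)

set_option maxHeartbeats 1000000 in
/-- Per-iteration recursion of Theorem 4.3 for ISTHT with noisy linear measurements. -/
theorem stmt12 {n1 n2 n3 m r : ℕ}
    (A : Tensor n1 n2 n3 →ₗ[ℝ] EuclideanSpace ℝ (Fin m)) (δ2r δ3r : ℝ)
    (hδ2r0 : 0 < δ2r) (hδ2r1 : δ2r < 1) (hδ3r0 : 0 < δ3r) (hδ3r1 : δ3r < 1)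
    (htRIP2r : ∀ X ∈ Tset n1 n2 n3 (2 * r),
      (1 - δ2r) * ‖X‖ ^ 2 ≤ ‖A X‖ ^ 2 ∧ ‖A X‖ ^ 2 ≤ (1 + δ2r) * ‖X‖ ^ 2)
    (htRIP3r : ∀ X ∈ Tset n1 n2 n3 (3 * r),
      (1 - δ3r) * ‖X‖ ^ 2 ≤ ‖A X‖ ^ 2 ∧ ‖A X‖ ^ 2 ≤ (1 + δ3r) * ‖X‖ ^ 2)
    (Xstar : Tensor n1 n2 n3) (hXstar : Xstar ∈ Tset n1 n2 n3 r)
    (e : EuclideanSpace ℝ (Fin m)) (ε : ℝ) (he : ‖e‖ ≤ ε)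
    (y : EuclideanSpace ℝ (Fin m)) (hy : y = A Xstar + e)
    (X : Tensor n1 n2 n3) (hX : X ∈ Tset n1 n2 n3 r) (γ : ℝ) (hγ : 0 < γ)
    (Xplus : Tensor n1 n2 n3) (hXplus : Xplus ∈ Tset n1 n2 n3 r)
    (hbest : ∀ W ∈ Tset n1 n2 n3 r,
      ‖Xplus - (X - γ • LinearMap.adjoint A (A X - y))‖
        ≤ ‖W - (X - γ • LinearMap.adjoint A (A X - y))‖) :
    ‖Xplus - Xstar‖ ≤ 2 * (|1 - γ| + γ * δ3r) * ‖X - Xstar‖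
      + 2 * γ * ε * Real.sqrt (1 + δ2r) := by
  set Z : Tensor n1 n2 n3 := X - γ • LinearMap.adjoint A (A X - y) with hZdef
  set D : Tensor n1 n2 n3 := Xplus - Xstar with hDdef
  set V : Tensor n1 n2 n3 := X - Xstar with hVdef
  have hε0 : 0 ≤ ε := le_trans (norm_nonneg e) he
  -- membership lemmas
  have mem3 : ∀ a b c : ℝ, a • Xplus + (b • X + c • Xstar) ∈ Tset n1 n2 n3 (3 * r) := by
    intro a b c
    have h := Tset_add' (Tset_smul' a hXplus) (Tset_add' (Tset_smul' b hX) (Tset_smul' c hXstar))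
    rwa [show r + (r + r) = 3 * r by ring] at h
  have hD2 : D ∈ Tset n1 n2 n3 (2 * r) := by
    have h := Tset_add' hXplus (Tset_smul' (-1 : ℝ) hXstar)
    rw [show r + r = 2 * r by ring] at h
    have : D = Xplus + (-1 : ℝ) • Xstar := by rw [hDdef]; module
    rwa [this]
  -- cross inner product bound
  have hcross : |⟪A D, A V⟫ - ⟪D, V⟫| ≤ δ3r * (‖D‖ * ‖V‖) := by
    by_cases hD0 : D = 0
    · simp [hD0]
    by_cases hV0 : V = 0
    · simp [hV0]
    have hDn : (0:ℝ) < ‖D‖ := norm_pos_iff.2 hD0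
    have hVn : (0:ℝ) < ‖V‖ := norm_pos_iff.2 hV0
    set t : ℝ := Real.sqrt (‖V‖ / ‖D‖) with htdef
    have ht : 0 < t := Real.sqrt_pos.2 (div_pos hVn hDn)
    have ht2 : t ^ 2 = ‖V‖ / ‖D‖ := Real.sq_sqrt (div_pos hVn hDn).le
    have h1 : t • D + t⁻¹ • V ∈ Tset n1 n2 n3 (3 * r) := by
      have : t • D + t⁻¹ • V = t • Xplus + (t⁻¹ • X + (-t - t⁻¹) • Xstar) := by
        rw [hDdef, hVdef]; module
      rw [this]; exact mem3 _ _ _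
    have h2 : t • D - t⁻¹ • V ∈ Tset n1 n2 n3 (3 * r) := by
      have : t • D - t⁻¹ • V = t • Xplus + ((-t⁻¹) • X + (-t + t⁻¹) • Xstar) := by
        rw [hDdef, hVdef]; module
      rw [this]; exact mem3 _ _ _
    have hc := cross_aux' A htRIP3r h1 h2
    rw [map_smul, map_smul, real_inner_smul_left, real_inner_smul_right,
      real_inner_smul_left, real_inner_smul_right, norm_smul, norm_smul] at hc
    have htne : t ≠ 0 := ht.ne'
    have hta : ‖t‖ = t := by rw [Real.norm_eq_abs]; exact abs_of_pos ht
    have htia : ‖t⁻¹‖ = t⁻¹ := by rw [Real.norm_eq_abs]; exact abs_of_pos (inv_pos.2 ht)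
    rw [hta, htia] at hc
    have hmul : t * (t⁻¹ * ⟪A D, A V⟫) = ⟪A D, A V⟫ := by
      field_simp
    have hmul2 : t * (t⁻¹ * ⟪D, V⟫) = ⟪D, V⟫ := by field_simp
    rw [hmul, hmul2] at hc
    have hnorm : δ3r * ((t * ‖D‖) ^ 2 + (t⁻¹ * ‖V‖) ^ 2) / 2 = δ3r * (‖D‖ * ‖V‖) := by
      have hti2 : (t⁻¹) ^ 2 = ‖D‖ / ‖V‖ := by
        rw [← one_div, div_pow, one_pow, ht2]
        field_simp
      rw [mul_pow, mul_pow, ht2, hti2]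
      field_simp
      ring
    rwa [hnorm] at hc
  -- bound on ‖A D‖
  have hAD : ‖A D‖ ≤ Real.sqrt (1 + δ2r) * ‖D‖ := by
    have h := (htRIP2r D hD2).2
    have h1 : ‖A D‖ = Real.sqrt (‖A D‖ ^ 2) := by
      rw [Real.sqrt_sq (norm_nonneg _)]
    rw [h1]
    calc Real.sqrt (‖A D‖ ^ 2) ≤ Real.sqrt ((1 + δ2r) * ‖D‖ ^ 2) := Real.sqrt_le_sqrt h
      _ = Real.sqrt (1 + δ2r) * ‖D‖ := by
          rw [Real.sqrt_mul (by positivity), Real.sqrt_sq (norm_nonneg _)]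
  -- inner product decomposition
  have hAXy : A X - y = A V - e := by
    rw [hy, hVdef, map_sub]; abel
  have hinner : ⟪D, Z - Xstar⟫ = ⟪D, V⟫ - γ * ⟪A D, A V⟫ + γ * ⟪A D, e⟫ := by
    have hZX : Z - Xstar = V - γ • LinearMap.adjoint A (A V - e) := by
      rw [hZdef, hVdef, hAXy]; abel
    rw [hZX, inner_sub_right, real_inner_smul_right, LinearMap.adjoint_inner_right]
    have hsplit : ⟪A D, A V - e⟫ = ⟪A D, A V⟫ - ⟪A D, e⟫ := inner_sub_right _ _ _
    rw [hsplit]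
    ring
  -- the optimality inequality squared
  have key : ‖D‖ ^ 2 ≤ 2 * ⟪D, Z - Xstar⟫ := by
    have hb := hbest Xstar hXstar
    have hsq : ‖Xplus - Z‖ ^ 2 ≤ ‖Xstar - Z‖ ^ 2 := by
      nlinarith [norm_nonneg (Xplus - Z), norm_nonneg (Xstar - Z)]
    have e1 : Xplus - Z = D - (Z - Xstar) := by rw [hDdef]; abel
    have e2 : ‖Xstar - Z‖ = ‖Z - Xstar‖ := norm_sub_rev _ _
    rw [e1, e2] at hsq
    have e3 := norm_sub_sq_real D (Z - Xstar)
    linarith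
  -- assemble the bound on the inner product
  have h1 : ⟪D, Z - Xstar⟫ ≤ (|1 - γ| + γ * δ3r) * (‖D‖ * ‖V‖)
      + γ * ((Real.sqrt (1 + δ2r) * ‖D‖) * ε) := by
    have habs : |⟪D, V⟫| ≤ ‖D‖ * ‖V‖ := abs_real_inner_le_norm D V
    have h3 : ⟪A D, e⟫ ≤ ‖A D‖ * ‖e‖ := real_inner_le_norm _ _
    have h4 : ‖A D‖ * ‖e‖ ≤ (Real.sqrt (1 + δ2r) * ‖D‖) * ε :=
      mul_le_mul hAD he (norm_nonneg e) (by positivity)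
    have h5 : (1 - γ) * ⟪D, V⟫ ≤ |1 - γ| * (‖D‖ * ‖V‖) := by
      calc (1 - γ) * ⟪D, V⟫ ≤ |(1 - γ) * ⟪D, V⟫| := le_abs_self _
        _ = |1 - γ| * |⟪D, V⟫| := abs_mul _ _
        _ ≤ |1 - γ| * (‖D‖ * ‖V‖) := mul_le_mul_of_nonneg_left habs (abs_nonneg _)
    have h6 : γ * (⟪D, V⟫ - ⟪A D, A V⟫) ≤ γ * (δ3r * (‖D‖ * ‖V‖)) := by
      apply mul_le_mul_of_nonneg_left _ hγ.le
      have := (abs_le.1 hcross).1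
      linarith
    have h7 : γ * ⟪A D, e⟫ ≤ γ * ((Real.sqrt (1 + δ2r) * ‖D‖) * ε) :=
      mul_le_mul_of_nonneg_left (h3.trans h4) hγ.le
    rw [hinner]
    linarith
  -- conclude
  rcases eq_or_lt_of_le (norm_nonneg D) with hD0 | hDpos
  · rw [← hD0]
    have hb1 : 0 ≤ 2 * (|1 - γ| + γ * δ3r) * ‖V‖ :=
      mul_nonneg (mul_nonneg (by norm_num)
        (add_nonneg (abs_nonneg _) (mul_nonneg hγ.le hδ3r0.le))) (norm_nonneg _)
    have hb2 : 0 ≤ 2 * γ * ε * Real.sqrt (1 + δ2r) := by positivity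
    linarith
  · have hfin : ‖D‖ ^ 2 ≤ (2 * (|1 - γ| + γ * δ3r) * ‖V‖
        + 2 * γ * ε * Real.sqrt (1 + δ2r)) * ‖D‖ := by
      calc ‖D‖ ^ 2 ≤ 2 * ⟪D, Z - Xstar⟫ := key
        _ ≤ 2 * ((|1 - γ| + γ * δ3r) * (‖D‖ * ‖V‖)
            + γ * ((Real.sqrt (1 + δ2r) * ‖D‖) * ε)) := by linarith
        _ = (2 * (|1 - γ| + γ * δ3r) * ‖V‖ + 2 * γ * ε * Real.sqrt (1 + δ2r)) * ‖D‖ := by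
            ring
    rw [pow_two] at hfin
    exact le_of_mul_le_mul_right hfin hDpos

end
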